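/- arXiv:1607.00205 — 4 statements merged into one kernel-verified Lean document; each statement's English description precedes it below -/
import Mathlib

section
/- Let p ∈ ℙ₀ and let D ⊆ ℙ₀↾t(p) be dense in ℙ₀↾t(p) (every element of ℙ₀↾t(p) has an extension in D). Then the set {q ∈ ℙ₀ : t(q) ≤_{F_lim-tree} t(p) and q↾t(p) ∈ D} is dense in ℙ₀ below p: every q ∈ ℙ₀ with q ≤₀ p has an extension q̄ ≤₀ q with q̄↾t(p) ∈ D. -/
noncomputable section

open Classical

/-- Ordinals (in the base universe). -/
abbrev Ord0 : Type 1 := Ordinal.{0}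
/-- Cardinals (in the base universe). -/
abbrev Card0 : Type 1 := Cardinal.{0}

/-- Vertices of trees: pairs (κ, i) of a cardinal (the level) and an ordinal (the index). -/
abbrev Vertex : Type 1 := Card0 × Ord0

/-- κ is a successor cardinal. -/
def IsSuccCard (κ : Card0) : Prop := ∃ μ : Card0, Cardinal.aleph0 ≤ μ ∧ κ = Order.succ μ

/-- κ is an (infinite) limit cardinal. -/
def IsLimitCard (κ : Card0) : Prop := Cardinal.aleph0 ≤ κ ∧ ¬ IsSuccCard κ

/-- The modified function F_lim. -/
def FlimOf (F : Card0 → Card0) (κ : Card0) : Card0 :=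
  if κ < Cardinal.aleph Ordinal.omega0 then F Cardinal.aleph0
  else if IsLimitCard κ then F κ
  else F (sSup {lam : Card0 | lam < κ ∧ IsLimitCard lam})

/-- A set (of objects living in `Type 1`) has cardinality < κ. -/
def SetCardLT {α : Type 1} (S : Set α) (κ : Card0) : Prop :=
  Cardinal.mk ↥S < Cardinal.lift.{1} κ

/-- Raw data for conditions in ℙ₀: a set of vertices, a binary relation on vertices and
a valuation assigning to each vertex a partial 0-1-function on ordinals. -/
structure RawP0 : Type 1 where
  verts : Set Vertex
  le : Vertex → Vertex → Prop
  val : Vertex → Ord0 → Option Bool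

/-- Domain of the partial function attached to vertex v. -/
def dom0 (p : RawP0) (v : Vertex) : Set Ord0 := {ζ | p.val v ζ ≠ none}

/-- (t, le) is an F_lim-tree. -/
def IsFlimTree (Flim : Card0 → Card0) (t : Set Vertex) (le : Vertex → Vertex → Prop) : Prop :=
  (∀ v ∈ t, (v.1 = 0 ∧ v.2 = 0) ∨ (Cardinal.aleph0 ≤ v.1 ∧ v.2 < (Flim v.1).ord)) ∧
  (∀ a b, le a b → a ∈ t ∧ b ∈ t) ∧
  (∀ v ∈ t, le v v) ∧
  (∀ a b c, le a b → le b c → le a c) ∧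
  (∀ a b, le a b → le b a → a = b) ∧
  (∀ a b, le a b → a.1 ≤ b.1) ∧
  (∀ b ∈ t, ∀ κ : Card0, (κ = 0 ∨ Cardinal.aleph0 ≤ κ) → κ < b.1 →
      ∃! i : Ord0, (κ, i) ∈ t ∧ le (κ, i) b) ∧
  (∃ M : Finset Vertex, ↑M ⊆ t ∧ ∀ v ∈ t, ∃ m ∈ M, le v m) ∧
  (∀ κ : Card0, IsLimitCard κ → Cardinal.aleph0 < κ → ∀ i i' : Ord0,
      (κ, i) ∈ t → (κ, i') ∈ t →
      ({w | le w (κ, i) ∧ w ≠ (κ, i)} = {w | le w (κ, i') ∧ w ≠ (κ, i')}) → i = i')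

/-- p is a condition of the forcing ℙ₀. -/
def IsP0 (F : Card0 → Card0) (p : RawP0) : Prop :=
  IsFlimTree (FlimOf F) p.verts p.le ∧
  (∀ v, v ∉ p.verts → ∀ ζ, p.val v ζ = none) ∧
  (∀ v ∈ p.verts, ∀ μ : Card0, Cardinal.aleph0 ≤ μ → v.1 = Order.succ μ →
      (∀ ζ ∈ dom0 p v, μ.ord ≤ ζ ∧ ζ < v.1.ord) ∧ SetCardLT (dom0 p v) v.1) ∧
  (∀ v ∈ p.verts, v.1 = Cardinal.aleph0 →
      (∀ ζ ∈ dom0 p v, ζ < Cardinal.aleph0.ord) ∧ (dom0 p v).Finite) ∧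
  (∀ v ∈ p.verts, (v.1 = 0 ∨ (IsLimitCard v.1 ∧ Cardinal.aleph0 < v.1)) →
      ∀ ζ, p.val v ζ = none) ∧
  (∀ v ∈ p.verts, IsLimitCard v.1 → (v.1).IsRegular →
      SetCardLT {ζ : Ord0 | ∃ w, w ∈ p.verts ∧ IsSuccCard w.1 ∧ p.le w v ∧ ζ ∈ dom0 p w} v.1)

/-- t(q) extends t(p) as an F_lim-tree. -/
def treeLe (q p : RawP0) : Prop :=
  p.verts ⊆ q.verts ∧ ∀ a b, p.le a b → q.le a b

/-- The partial order ≤₀ on conditions of ℙ₀. -/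
def le0 (q p : RawP0) : Prop :=
  treeLe q p ∧ ∀ v ∈ p.verts, ∀ ζ b, p.val v ζ = some b → q.val v ζ = some b

/-- The class of conditions of ℙ₀. -/
def P0set (F : Card0 → Card0) : Set RawP0 := {p | IsP0 F p}

/-- Compatibility with common extension in a given subclass S. -/
def Compat0In (S : Set RawP0) (p q : RawP0) : Prop := ∃ r ∈ S, le0 r p ∧ le0 r q

/-- Compatibility in ℙ₀. -/
def Compat0 (F : Card0 → Card0) (p q : RawP0) : Prop := Compat0In (P0set F) p q

/-- The height of p is at most lam. -/
def heightLE (p : RawP0) (lam : Card0) : Prop := ∀ v ∈ p.verts, v.1 ≤ lam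

/-- ℙ₀↾t(p): the conditions of ℙ₀ whose domain is exactly the tree t(p). -/
def P0restTree (F : Card0 → Card0) (p : RawP0) : Set RawP0 :=
  {q | IsP0 F q ∧ q.verts = p.verts ∧ q.le = p.le}

/-- The restriction q↾t(p) of a condition q (with t(q) ≤ t(p)) to the domain t(p). -/
def restrictToTree (p q : RawP0) : RawP0 where
  verts := p.verts
  le := p.le
  val := fun v ζ => if v ∈ p.verts then q.val v ζ else none

/-! ### Auxiliary lemmas -/

lemma RawP0.ext' {a b : RawP0} (h1 : a.verts = b.verts) (h2 : a.le = b.le)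
    (h3 : a.val = b.val) : a = b := by
  cases a; cases b; simp_all

lemma setCardLT_of_subset {α : Type 1} {A B : Set α} {κ : Card0} (h : A ⊆ B)
    (hB : SetCardLT B κ) : SetCardLT A κ :=
  lt_of_le_of_lt (Cardinal.mk_le_mk_of_subset h) hB

lemma setCardLT_union {α : Type 1} {A B : Set α} {κ : Card0} (hκ : Cardinal.aleph0 ≤ κ)
    (hA : SetCardLT A κ) (hB : SetCardLT B κ) : SetCardLT (A ∪ B) κ := by
  have hκ' : Cardinal.aleph0 ≤ Cardinal.lift.{1} κ := Cardinal.aleph0_le_lift.mpr hκ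
  exact lt_of_le_of_lt (Cardinal.mk_union_le A B) (Cardinal.add_lt_of_lt hκ' hA hB)

lemma setCardLT_empty {α : Type 1} {κ : Card0} (hκ : Cardinal.aleph0 ≤ κ) :
    SetCardLT (∅ : Set α) κ := by
  unfold SetCardLT
  rw [Cardinal.mk_emptyCollection]
  exact lt_of_lt_of_le Cardinal.aleph0_pos (Cardinal.aleph0_le_lift.mpr hκ)

lemma setCardLT_biUnion {α β : Type 1} {κ : Card0} (hκ : Cardinal.aleph0 ≤ κ)
    (s : Finset β) (U : β → Set α) (h : ∀ m ∈ s, SetCardLT (U m) κ) :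
    SetCardLT (⋃ m ∈ s, U m) κ := by
  classical
  induction s using Finset.induction_on with
  | empty => simpa using setCardLT_empty hκ
  | @insert a s ha ih =>
      rw [Finset.set_biUnion_insert]
      exact setCardLT_union hκ (h a (Finset.mem_insert_self a s))
        (ih fun m hm => h m (Finset.mem_insert_of_mem hm))

lemma setCardLT_Iio {μ κ : Card0} (h : μ < κ) : SetCardLT (Set.Iio μ.ord) κ := by
  unfold SetCardLT
  rw [Ordinal.mk_Iio_ordinal, Cardinal.card_ord]
  exact Cardinal.lift_lt.mpr h

/-- The candidate extension: on `t(p)` use the values of `d`, elsewhere those of `q`. -/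
def qbarOf (p d q : RawP0) : RawP0 where
  verts := q.verts
  le := q.le
  val := fun v ζ => if v ∈ p.verts then d.val v ζ else q.val v ζ

lemma qbarOf_domIn {p d q : RawP0} {v : Vertex} (hv : v ∈ p.verts) :
    dom0 (qbarOf p d q) v = dom0 d v := by
  ext ζ; simp [dom0, qbarOf, hv]

lemma qbarOf_domOut {p d q : RawP0} {v : Vertex} (hv : v ∉ p.verts) :
    dom0 (qbarOf p d q) v = dom0 q v := by
  ext ζ; simp [dom0, qbarOf, hv]

lemma restrict_dom {p q : RawP0} {v : Vertex} (hv : v ∈ p.verts) :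
    dom0 (restrictToTree p q) v = dom0 q v := by
  ext ζ; simp [dom0, restrictToTree, hv]

/-- If D ⊆ ℙ₀↾t(p) is dense in ℙ₀↾t(p), then
{q ∈ ℙ₀ : t(q) ≤ t(p) and q↾t(p) ∈ D} is dense in ℙ₀ below p. -/
theorem statement3 (F : Card0 → Card0)
    (hF : ∀ κ, Cardinal.aleph0 ≤ κ → Order.succ (Order.succ κ) ≤ F κ)
    (hFmono : ∀ κ lam, Cardinal.aleph0 ≤ κ → κ ≤ lam → F κ ≤ F lam)
    (p : RawP0) (hp : IsP0 F p)
    (D : Set RawP0) (hD : D ⊆ P0restTree F p)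
    (hdense : ∀ r ∈ P0restTree F p, ∃ d ∈ D, le0 d r) :
    ∀ q, IsP0 F q → le0 q p →
      ∃ qbar, IsP0 F qbar ∧ le0 qbar q ∧ treeLe qbar p ∧ restrictToTree p qbar ∈ D := by
  intro q hq hqp
  classical
  have hpt' := hp.1
  have hqt' := hq.1
  obtain ⟨hpt, hpnone, hpsucc, hpal, hplim, hpreg⟩ := hp
  obtain ⟨hqt, hqnone, hqsucc, hqal, hqlim, hqreg⟩ := hq
  obtain ⟨⟨hsub, hlesub⟩, hval⟩ := hqp
  obtain ⟨-, -, hprefl, hptrans, -, hplevel, hpuniq, ⟨M, hMsub, hMmax⟩, -⟩ := hpt'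
  obtain ⟨-, -, -, -, -, hqlevel, -, -, -⟩ := hqt'
  -- the restriction r = q↾t(p) is a condition in ℙ₀↾t(p)
  have hrP0 : IsP0 F (restrictToTree p q) := by
    refine ⟨hpt, ?_, ?_, ?_, ?_, ?_⟩
    · intro v hv ζ
      show (if v ∈ p.verts then q.val v ζ else none) = none
      exact if_neg hv
    · intro v hv μ hμ hs
      rw [restrict_dom (p := p) (q := q) hv]
      exact hqsucc v (hsub hv) μ hμ hs
    · intro v hv h0
      rw [restrict_dom (p := p) (q := q) hv]
      exact hqal v (hsub hv) h0
    · intro v hv hc ζ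
      show (if v ∈ p.verts then q.val v ζ else none) = none
      rw [if_pos (show v ∈ p.verts from hv)]
      exact hqlim v (hsub hv) hc ζ
    · intro v hv hl hr
      refine setCardLT_of_subset ?_ (hqreg v (hsub hv) hl hr)
      rintro ζ ⟨w, hw, hws, hwle, hwd⟩
      exact ⟨w, hsub hw, hws, hlesub _ _ hwle, by rwa [restrict_dom (p := p) (q := q) hw] at hwd⟩
  obtain ⟨d, hdD, hdled⟩ := hdense _ ⟨hrP0, rfl, rfl⟩
  obtain ⟨hdP0, hdverts, hdle⟩ := hD hdD
  obtain ⟨hdt, hdnone, hdsucc, hdal, hdlim, hdreg⟩ := hdP0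
  obtain ⟨-, hdval⟩ := hdled
  refine ⟨qbarOf p d q, ⟨hqt, ?_, ?_, ?_, ?_, ?_⟩, ⟨⟨fun _ h => h, fun _ _ h => h⟩, ?_⟩,
    ⟨hsub, hlesub⟩, ?_⟩
  · -- values vanish outside the tree
    intro v hv ζ
    show (if v ∈ p.verts then d.val v ζ else q.val v ζ) = none
    rw [if_neg (fun h => hv (hsub h))]
    exact hqnone v hv ζ
  · -- successor levels
    intro v hv μ hμ hs
    by_cases hvp : v ∈ p.verts
    · rw [qbarOf_domIn hvp]
      exact hdsucc v (by rw [hdverts]; exact hvp) μ hμ hs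
    · rw [qbarOf_domOut hvp]
      exact hqsucc v hv μ hμ hs
  · -- level ℵ₀
    intro v hv h0
    by_cases hvp : v ∈ p.verts
    · rw [qbarOf_domIn hvp]
      exact hdal v (by rw [hdverts]; exact hvp) h0
    · rw [qbarOf_domOut hvp]
      exact hqal v hv h0
  · -- limit levels und level 0
    intro v hv hc ζ
    show (if v ∈ p.verts then d.val v ζ else q.val v ζ) = none
    by_cases hvp : v ∈ p.verts
    · rw [if_pos hvp]
      exact hdlim v (by rw [hdverts]; exact hvp) hc ζ
    · rw [if_neg hvp]
      exact hqlim v hv hc ζ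
  · -- regular limit levels: the key cardinality bound
    intro v hv hlim hreg
    have hκ0 : Cardinal.aleph0 ≤ v.1 := hlim.1
    have key : ∀ m : Vertex, ∃ U : Set Ord0, SetCardLT U v.1 ∧
        (m ∈ p.verts → ∀ w ζ, w ∈ p.verts → IsSuccCard w.1 → w.1 < v.1 → p.le w m →
          ζ ∈ dom0 d w → ζ ∈ U) := by
      intro m
      by_cases hm : m ∈ p.verts
      · by_cases hcmp : v.1 ≤ m.1
        · -- there is a vertex u of t(p) at level v.1 below m
          have hu : ∃ u : Vertex, u ∈ p.verts ∧ u.1 = v.1 ∧ p.le u m := by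
            rcases eq_or_lt_of_le hcmp with heq | hlt
            · exact ⟨m, hm, heq.symm, hprefl m hm⟩
            · obtain ⟨i, ⟨hi1, hi2⟩, -⟩ := hpuniq m hm v.1 (Or.inr hκ0) hlt
              exact ⟨(v.1, i), hi1, rfl, hi2⟩
          obtain ⟨u, huP, huκ, hum⟩ := hu
          refine ⟨{ζ | ∃ w, w ∈ p.verts ∧ IsSuccCard w.1 ∧ p.le w u ∧ ζ ∈ dom0 d w}, ?_, ?_⟩
          · have hbound := hdreg u (by rw [hdverts]; exact huP)
              (by rw [huκ]; exact hlim) (by rw [huκ]; exact hreg)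
            rw [hdverts, hdle, huκ] at hbound
            exact hbound
          · intro _ w ζ hw hws hwlt hwm hζ
            obtain ⟨w1, w2⟩ := w
            -- w lies below u in t(p), by uniqueness of predecessors
            have hwκ : Cardinal.aleph0 ≤ w1 := by
              obtain ⟨μ, hμ, he⟩ := hws
              exact (hμ.trans (Order.le_succ μ)).trans (le_of_eq he.symm)
            have hwu1 : w1 < u.1 := by rw [huκ]; exact hwlt
            have hwm1 : w1 < m.1 := lt_of_lt_of_le hwu1 (hplevel u m hum)
            obtain ⟨i, hi, -⟩ := hpuniq u huP w1 (Or.inr hwκ) hwu1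
            obtain ⟨j, -, hjm⟩ := hpuniq m hm w1 (Or.inr hwκ) hwm1
            have h1 : w2 = j := hjm w2 ⟨hw, hwm⟩
            have h2 : i = j := hjm i ⟨hi.1, hptrans _ _ _ hi.2 hum⟩
            have hle : p.le (w1, w2) u := by
              rw [h1, ← h2]; exact hi.2
            exact ⟨(w1, w2), hw, hws, hle, hζ⟩
        · -- m lies below level v.1; everything below m is bounded by m.1.ord
          refine ⟨Set.Iio (m.1.ord), setCardLT_Iio (lt_of_not_ge hcmp), ?_⟩
          intro _ w ζ hw hws hwlt hwm hζ
          obtain ⟨μ, hμ, he⟩ := hws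
          have hζ' := (hdsucc w (by rw [hdverts]; exact hw) μ hμ he).1 ζ hζ
          show ζ < m.1.ord
          exact lt_of_lt_of_le hζ'.2 (Cardinal.ord_le_ord.mpr (hplevel w m hwm))
      · exact ⟨∅, setCardLT_empty hκ0, fun h => absurd h hm⟩
    choose U hU1 hU2 using key
    refine setCardLT_of_subset ?_
      (setCardLT_union hκ0 (hqreg v hv hlim hreg)
        (setCardLT_biUnion hκ0 M U (fun m _ => hU1 m)))
    rintro ζ ⟨w, hw, hws, hwv, hζ⟩
    by_cases hwp : w ∈ p.verts
    · obtain ⟨m, hmM, hwm⟩ := hMmax w hwp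
      have hwlt : w.1 < v.1 := by
        refine lt_of_le_of_ne (hqlevel w v hwv) (fun he => hlim.2 ?_)
        rw [← he]; exact hws
      rw [qbarOf_domIn hwp] at hζ
      exact Or.inr (Set.mem_iUnion₂.mpr
        ⟨m, hmM, hU2 m (hMsub hmM) w ζ hwp hws hwlt hwm hζ⟩)
    · rw [qbarOf_domOut hwp] at hζ
      exact Or.inl ⟨w, hw, hws, hwv, hζ⟩
  · -- qbar ≤₀ q
    intro v hv ζ b hb
    show (if v ∈ p.verts then d.val v ζ else q.val v ζ) = some b
    by_cases hvp : v ∈ p.verts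
    · rw [if_pos hvp]
      refine hdval v hvp ζ b ?_
      show (if v ∈ p.verts then q.val v ζ else none) = some b
      rw [if_pos hvp]; exact hb
    · rw [if_neg hvp]; exact hb
  · -- the restriction of qbar to t(p) equals d, hence lies in D
    have hrd : restrictToTree p (qbarOf p d q) = d := by
      refine RawP0.ext' hdverts.symm hdle.symm ?_
      funext v ζ
      show (if v ∈ p.verts then (qbarOf p d q).val v ζ else none) = d.val v ζ
      by_cases hvp : v ∈ p.verts
      · rw [if_pos hvp]
        show (if v ∈ p.verts then d.val v ζ else q.val v ζ) = d.val v ζ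
        rw [if_pos hvp]
      · rw [if_neg hvp]
        exact (hdnone v (by rw [hdverts]; exact hvp) ζ).symm
    rw [hrd]
    exact hdD
end
end

section
/- For any two conditions p, q ∈ ℙ₁ there exists π ∈ A₁ with p, q ∈ D_π such that πp and q are compatible in ℙ₁; moreover π can be chosen with supp π(κ⁺) = ∅ for every κ⁺ ∈ supp π (so that π acts only by flipping values). -/
noncomputable section

open Classical

/-- Raw data for conditions in ℙ₁: for each (successor) cardinal a partial 0-1-function
on pairs (ζ, i). -/
abbrev P1Raw : Type 1 := Card0 → Ord0 × Ord0 → Option Bool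

/-- Domain of the column at κ. -/
def dom1 (p : P1Raw) (κ : Card0) : Set (Ord0 × Ord0) := {x | p κ x ≠ none}

/-- Support of a condition of ℙ₁. -/
def supp1 (p : P1Raw) : Set Card0 := {κ | ∃ x, p κ x ≠ none}

/-- Succ′: successor cardinals κ⁺ with F(κ⁺) > F(ν⁺) for all successor cardinals ν⁺ < κ⁺. -/
def SuccPrime (F : Card0 → Card0) (κ : Card0) : Prop :=
  IsSuccCard κ ∧ ∀ ν, IsSuccCard ν → ν < κ → F ν < F κ

/-- p is a condition of the forcing ℙ₁. -/
def IsP1 (F : Card0 → Card0) (p : P1Raw) : Prop :=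
  (supp1 p).Finite ∧
  (∀ κ ∈ supp1 p, SuccPrime F κ) ∧
  (∀ κ ∈ supp1 p, ∀ μ : Card0, Cardinal.aleph0 ≤ μ → κ = Order.succ μ →
    (∀ x ∈ dom1 p κ, μ.ord ≤ x.1 ∧ x.1 < κ.ord ∧ x.2 < (F κ).ord) ∧
    SetCardLT (dom1 p κ) κ ∧
    (∀ x y, x ∈ dom1 p κ → y ∈ dom1 p κ → (x.1, y.2) ∈ dom1 p κ))

/-- The partial order ≤₁ on conditions of ℙ₁ (reverse inclusion). -/
def le1 (q p : P1Raw) : Prop := ∀ κ x b, p κ x = some b → q κ x = some b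

/-- The class of conditions of ℙ₁. -/
def P1set (F : Card0 → Card0) : Set P1Raw := {p | IsP1 F p}

/-- Compatibility with common extension in a given subclass S. -/
def Compat1In (S : Set P1Raw) (p q : P1Raw) : Prop := ∃ r ∈ S, le1 r p ∧ le1 r q

/-- Compatibility in ℙ₁. -/
def Compat1 (F : Card0 → Card0) (p q : P1Raw) : Prop := Compat1In (P1set F) p q

/-- The restriction p↾{(κ̄₀,ī₀),…}: keep, in each column κ̄_l, only the entries with
second coordinate ī_l. -/
def restr1 (S : Set (Card0 × Ord0)) (p : P1Raw) : P1Raw :=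
  fun κ x => if (κ, x.2) ∈ S then p κ x else none

/-- The group A₁ of partial ℙ₁-automorphisms. An element is determined, for each
κ⁺ in its finite support, by: a finite set supp π(κ⁺) of indices with a bijection
f_π(κ⁺) of it; a rectangular domain dom_x π(κ⁺) × dom_y π(κ⁺) of size < κ⁺;
flip values π(κ⁺)(ζ,i) ∈ 2 vanishing outside the domain; and for every
ζ ∈ dom_x π(κ⁺) a bijection π(κ⁺)(ζ) of 2^{supp π(κ⁺)}. -/
structure A1 (F : Card0 → Card0) : Type 1 where
  supp : Set Card0
  suppY : Card0 → Set Ord0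
  f : Card0 → Ord0 → Ord0
  domX : Card0 → Set Ord0
  domY : Card0 → Set Ord0
  flip : Card0 → Ord0 × Ord0 → Bool
  colmap : Card0 → Ord0 → (Ord0 → Bool) → (Ord0 → Bool)
  hsuppfin : supp.Finite
  hsupp : ∀ κ ∈ supp, SuccPrime F κ
  hYfin : ∀ κ, (suppY κ).Finite
  hY : ∀ κ ∈ supp, suppY κ ⊆ domY κ ∧ ∀ i ∈ suppY κ, i < (F κ).ord
  hf : ∀ κ, Set.BijOn (f κ) (suppY κ) (suppY κ) ∧ ∀ i ∉ suppY κ, f κ i = i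
  hdom : ∀ κ ∈ supp, ∀ μ : Card0, Cardinal.aleph0 ≤ μ → κ = Order.succ μ →
    (∀ ζ ∈ domX κ, μ.ord ≤ ζ ∧ ζ < κ.ord) ∧ (∀ i ∈ domY κ, i < (F κ).ord) ∧
    SetCardLT (domX κ ×ˢ domY κ) κ
  hflip : ∀ κ x, flip κ x = true → κ ∈ supp ∧ x.1 ∈ domX κ ∧ x.2 ∈ domY κ
  hcol1 : ∀ κ ζ g i, i ∉ suppY κ → colmap κ ζ g i = g i
  hcol2 : ∀ κ ζ g g', (∀ i ∈ suppY κ, g i = g' i) → ∀ i ∈ suppY κ, colmap κ ζ g i = colmap κ ζ g' i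
  hcol3 : ∀ κ ζ, Function.Bijective (colmap κ ζ)
  htriv : ∀ κ ∉ supp, suppY κ = ∅ ∧ domX κ = ∅ ∧ domY κ = ∅

/-- The dense domain D_π of a partial automorphism π ∈ A₁. -/
def A1.Dset {F : Card0 → Card0} (a : A1 F) : Set P1Raw :=
  {p | IsP1 F p ∧ ∀ κ, κ ∈ supp1 p → κ ∈ a.supp → a.domX κ ×ˢ a.domY κ ⊆ dom1 p κ}

/-- The action of π ∈ A₁ on conditions in its domain D_π. -/
def A1.act {F : Card0 → Card0} (a : A1 F) (p : P1Raw) : P1Raw := fun κ x =>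
  if κ ∈ a.supp then
    if x.2 ∈ a.suppY κ then
      if x.1 ∈ a.domX κ then
        (p κ x).map (fun _ => a.colmap κ x.1 (fun j => (p κ (x.1, j)).getD false) x.2)
      else p κ (x.1, a.f κ x.2)
    else if a.flip κ x then (p κ x).map (fun b => !b) else p κ x
  else p κ x

/-!
Let π flip exactly the entries on which p and q are both defined and disagree; its domain is
the rectangle spanned by dom p(κ⁺) ∩ dom q(κ⁺), which lies in both rectangular domains, so
p, q ∈ D_π. Then πp and q agree wherever both are defined, and two such conditions are
compatible: take q, then πp, and fill the rest of the rectangle spanned by their domains with 0.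
-/

open Cardinal

universe u

section RectHull

variable {α β : Type*}

def rectHull (S : Set (α × β)) : Set (α × β) := (Prod.fst '' S) ×ˢ (Prod.snd '' S)

lemma subset_rectHull (S : Set (α × β)) : S ⊆ rectHull S :=
  fun x hx => ⟨⟨x, hx, rfl⟩, ⟨x, hx, rfl⟩⟩

lemma rectHull_subset {S T : Set (α × β)} (hST : S ⊆ T)
    (hT : ∀ x y, x ∈ T → y ∈ T → (x.1, y.2) ∈ T) : rectHull S ⊆ T := by
  rintro ⟨a, b⟩ ⟨⟨x, hx, rfl⟩, ⟨y, hy, rfl⟩⟩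
  exact hT x y (hST hx) (hST hy)

lemma mk_rectHull_lt {α β : Type u} {S : Set (α × β)} {c : Cardinal.{u}} (hc : ℵ₀ ≤ c)
    (hS : #S < c) : #(rectHull S) < c := by
  rw [rectHull, mk_congr (Equiv.Set.prod _ _), mk_prod, lift_id, lift_id]
  exact mul_lt_of_lt hc (mk_image_le.trans_lt hS) (mk_image_le.trans_lt hS)

end RectHull

lemma aleph0_le_lift_succ {μ : Card0} (hμ : ℵ₀ ≤ μ) : ℵ₀ ≤ lift.{1} (Order.succ μ) := by
  rw [aleph0_le_lift]
  exact hμ.trans (Order.le_succ μ)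

lemma mem_supp1_of_mem_dom1 {p : P1Raw} {κ : Card0} {x : Ord0 × Ord0} (hx : x ∈ dom1 p κ) :
    κ ∈ supp1 p :=
  ⟨x, hx⟩

namespace IsP1

variable {F : Card0 → Card0} {p : P1Raw} {κ μ : Card0}

lemma bounds (hp : IsP1 F p) (hμ : ℵ₀ ≤ μ) (hκ : κ = Order.succ μ) {x : Ord0 × Ord0}
    (hx : x ∈ dom1 p κ) : μ.ord ≤ x.1 ∧ x.1 < κ.ord ∧ x.2 < (F κ).ord :=
  (hp.2.2 κ (mem_supp1_of_mem_dom1 hx) μ hμ hκ).1 x hx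

lemma mk_dom1_lt (hp : IsP1 F p) (hμ : ℵ₀ ≤ μ) (hκ : κ = Order.succ μ) :
    #(dom1 p κ) < lift.{1} κ := by
  by_cases hκp : κ ∈ supp1 p
  · exact (hp.2.2 κ hκp μ hμ hκ).2.1
  · have : dom1 p κ = ∅ := Set.eq_empty_of_forall_notMem fun x hx => hκp ⟨x, hx⟩
    rw [this, mk_eq_zero, hκ]
    exact aleph0_pos.trans_le (aleph0_le_lift_succ hμ)

lemma rect (hp : IsP1 F p) {x y : Ord0 × Ord0} (hx : x ∈ dom1 p κ) (hy : y ∈ dom1 p κ) :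
    (x.1, y.2) ∈ dom1 p κ := by
  obtain ⟨⟨μ, hμ, hκ⟩, -⟩ := hp.2.1 κ (mem_supp1_of_mem_dom1 hx)
  exact (hp.2.2 κ (mem_supp1_of_mem_dom1 hx) μ hμ hκ).2.2 x y hx hy

lemma rectHull_subset_dom1 (hp : IsP1 F p) {S : Set (Ord0 × Ord0)} (hS : S ⊆ dom1 p κ) :
    rectHull S ⊆ dom1 p κ :=
  rectHull_subset hS fun _ _ => hp.rect

lemma of_dom1_eq {r : P1Raw} (hp : IsP1 F p) (h : ∀ κ, dom1 r κ = dom1 p κ) : IsP1 F r := by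
  have hsupp : supp1 r = supp1 p := by
    ext κ
    exact exists_congr fun x => Set.ext_iff.1 (h κ) x
  simpa only [IsP1, hsupp, h] using hp

end IsP1

section Amalgamation

def amalg (p q : P1Raw) : P1Raw := fun κ x =>
  (q κ x).or ((p κ x).or (if x ∈ rectHull (dom1 p κ ∪ dom1 q κ) then some false else none))

lemma dom1_amalg (p q : P1Raw) (κ : Card0) :
    dom1 (amalg p q) κ = rectHull (dom1 p κ ∪ dom1 q κ) := by
  ext x
  have hp : p κ x ≠ none → x ∈ rectHull (dom1 p κ ∪ dom1 q κ) :=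
    fun h => subset_rectHull _ (Or.inl h)
  have hq : q κ x ≠ none → x ∈ rectHull (dom1 p κ ∪ dom1 q κ) :=
    fun h => subset_rectHull _ (Or.inr h)
  change amalg p q κ x ≠ none ↔ _
  rw [amalg, ne_eq, Option.or_eq_none_iff, Option.or_eq_none_iff]
  by_cases hx : x ∈ rectHull (dom1 p κ ∪ dom1 q κ)
  · simp [hx]
  · rw [if_neg hx]
    tauto

variable {F : Card0 → Card0} {p q : P1Raw}

lemma supp1_amalg_subset : supp1 (amalg p q) ⊆ supp1 p ∪ supp1 q := by
  rintro κ ⟨x, hx⟩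
  obtain ⟨⟨y, hy | hy, -⟩, -⟩ := (dom1_amalg p q κ).subset hx
  exacts [Or.inl ⟨y, hy⟩, Or.inr ⟨y, hy⟩]

lemma isP1_amalg (hp : IsP1 F p) (hq : IsP1 F q) : IsP1 F (amalg p q) := by
  refine ⟨(hp.1.union hq.1).subset supp1_amalg_subset,
    fun κ hκ => (supp1_amalg_subset hκ).elim (hp.2.1 κ) (hq.2.1 κ),
    fun κ _ μ hμ hκ => ⟨?_, ?_, ?_⟩⟩
  · have bounds : ∀ y ∈ dom1 p κ ∪ dom1 q κ, μ.ord ≤ y.1 ∧ y.1 < κ.ord ∧ y.2 < (F κ).ord :=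
      fun y hy => hy.elim (hp.bounds hμ hκ) (hq.bounds hμ hκ)
    rw [dom1_amalg]
    rintro ⟨a, b⟩ ⟨⟨y, hy, rfl⟩, ⟨z, hz, rfl⟩⟩
    exact ⟨(bounds y hy).1, (bounds y hy).2.1, (bounds z hz).2.2⟩
  · have hc := hκ ▸ aleph0_le_lift_succ hμ
    rw [SetCardLT, dom1_amalg]
    exact mk_rectHull_lt hc <| (mk_union_le _ _).trans_lt <|
      add_lt_of_lt hc (hp.mk_dom1_lt hμ hκ) (hq.mk_dom1_lt hμ hκ)
  · simp only [dom1_amalg]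
    exact fun x y hx hy => ⟨hx.1, hy.2⟩

lemma le1_amalg_left (h : ∀ κ x, x ∈ dom1 p κ → x ∈ dom1 q κ → p κ x = q κ x) :
    le1 (amalg p q) p := by
  intro κ x b hb
  by_cases hqx : q κ x = none
  · simp [amalg, hqx, hb]
  · have hpq := h κ x (by simp [dom1, hb]) hqx
    rw [hb] at hpq
    simp [amalg, ← hpq]

lemma le1_amalg_right : le1 (amalg p q) q := by
  intro κ x b hb
  simp [amalg, hb]

theorem compat1_of_agree (hp : IsP1 F p) (hq : IsP1 F q)
    (h : ∀ κ x, x ∈ dom1 p κ → x ∈ dom1 q κ → p κ x = q κ x) : Compat1 F p q :=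
  ⟨amalg p q, isP1_amalg hp hq, le1_amalg_left h, le1_amalg_right⟩

end Amalgamation

section FlipAuto

variable {F : Card0 → Card0} {p : P1Raw}

def flipAuto (hp : IsP1 F p) (q : P1Raw) : A1 F where
  supp := supp1 p ∩ supp1 q
  suppY _ := ∅
  f _ i := i
  domX κ := Prod.fst '' (dom1 p κ ∩ dom1 q κ)
  domY κ := Prod.snd '' (dom1 p κ ∩ dom1 q κ)
  flip κ x := decide (x ∈ dom1 p κ ∧ x ∈ dom1 q κ ∧ p κ x ≠ q κ x)
  colmap _ _ g := g
  hsuppfin := hp.1.inter_of_left _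
  hsupp κ hκ := hp.2.1 κ hκ.1
  hYfin _ := Set.finite_empty
  hY _ _ := ⟨Set.empty_subset _, fun _ hi => absurd hi (Set.notMem_empty _)⟩
  hf _ := ⟨Set.bijOn_empty _, fun _ _ => rfl⟩
  hdom κ _ μ hμ hκ := by
    refine ⟨?_, ?_, ?_⟩
    · rintro _ ⟨x, hx, rfl⟩
      exact (hp.bounds hμ hκ hx.1).imp_right And.left
    · rintro _ ⟨x, hx, rfl⟩
      exact (hp.bounds hμ hκ hx.1).2.2
    · exact (mk_le_mk_of_subset (hp.rectHull_subset_dom1 Set.inter_subset_left)).trans_lt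
        (hp.mk_dom1_lt hμ hκ)
  hflip κ x h := by
    obtain ⟨hpx, hqx, -⟩ := of_decide_eq_true h
    exact ⟨⟨⟨x, hpx⟩, ⟨x, hqx⟩⟩, subset_rectHull _ ⟨hpx, hqx⟩⟩
  hcol1 _ _ _ _ _ := rfl
  hcol2 _ _ _ _ _ _ hi := absurd hi (Set.notMem_empty _)
  hcol3 _ _ := Function.bijective_id
  htriv κ hκ := by
    have : dom1 p κ ∩ dom1 q κ = ∅ :=
      Set.eq_empty_of_forall_notMem fun x hx => hκ ⟨⟨x, hx.1⟩, ⟨x, hx.2⟩⟩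
    simp [this]

variable (hp : IsP1 F p) (q : P1Raw)

lemma flipAuto_act (κ : Card0) (x : Ord0 × Ord0) :
    (flipAuto hp q).act p κ x =
      if x ∈ dom1 p κ ∧ x ∈ dom1 q κ ∧ p κ x ≠ q κ x then (p κ x).map (!·) else p κ x := by
  by_cases hκ : κ ∈ supp1 p ∩ supp1 q
  · simp [A1.act, flipAuto, hκ]
  · have hx : ¬(x ∈ dom1 p κ ∧ x ∈ dom1 q κ) := fun hx => hκ ⟨⟨x, hx.1⟩, ⟨x, hx.2⟩⟩
    simp only [A1.act, flipAuto, hκ, if_false]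
    rw [if_neg (fun h => hx ⟨h.1, h.2.1⟩)]

lemma dom1_flipAuto_act (κ : Card0) : dom1 ((flipAuto hp q).act p) κ = dom1 p κ := by
  ext x
  change _ ≠ none ↔ _ ≠ none
  rw [flipAuto_act]
  split_ifs <;> simp

lemma flipAuto_act_eq_of_mem {κ : Card0} {x : Ord0 × Ord0} (hpx : x ∈ dom1 p κ)
    (hqx : x ∈ dom1 q κ) : (flipAuto hp q).act p κ x = q κ x := by
  obtain ⟨b, hb⟩ := Option.ne_none_iff_exists'.1 hpx
  obtain ⟨c, hc⟩ := Option.ne_none_iff_exists'.1 hqx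
  rw [flipAuto_act, hb, hc]
  cases b <;> cases c <;> simp [hpx, hqx]

end FlipAuto

theorem statement7_general (F : Card0 → Card0)
    (p q : P1Raw) (hp : IsP1 F p) (hq : IsP1 F q) :
    ∃ a : A1 F, p ∈ a.Dset ∧ q ∈ a.Dset ∧ Compat1 F (a.act p) q ∧
      ∀ κ, a.suppY κ = ∅ := by
  refine ⟨flipAuto hp q, ⟨hp, fun κ _ _ => ?_⟩, ⟨hq, fun κ _ _ => ?_⟩, ?_, fun _ => rfl⟩
  · exact hp.rectHull_subset_dom1 Set.inter_subset_left
  · exact hq.rectHull_subset_dom1 Set.inter_subset_right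
  · have hact : IsP1 F ((flipAuto hp q).act p) := hp.of_dom1_eq (dom1_flipAuto_act hp q)
    refine compat1_of_agree hact hq fun κ x hx hqx => ?_
    rw [dom1_flipAuto_act] at hx
    exact flipAuto_act_eq_of_mem hp q hx hqx

/-- For any two conditions p, q ∈ ℙ₁ there is π ∈ A₁ with
p, q ∈ D_π and πp ∥ q, where π acts only by flipping values
(supp π(κ⁺) = ∅ for every κ⁺). -/
theorem statement7 (F : Card0 → Card0)
    (hF : ∀ κ, Cardinal.aleph0 ≤ κ → Order.succ (Order.succ κ) ≤ F κ)
    (hFmono : ∀ κ lam, Cardinal.aleph0 ≤ κ → κ ≤ lam → F κ ≤ F lam)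
    (p q : P1Raw) (hp : IsP1 F p) (hq : IsP1 F q) :
    ∃ a : A1 F, p ∈ a.Dset ∧ q ∈ a.Dset ∧ Compat1 F (a.act p) q ∧
      ∀ κ, a.suppY κ = ∅ :=
  statement7_general F p q hp hq
end
end

section
/- The subgroups Fix₀(κ,i) and Small₀(κ,[0,α)) of A₀ satisfy the normality property: (i) for every π ∈ A₀, every κ ∈ Card and every i < F_lim(κ), π⁻¹ · Fix₀(κ,i) · π = Fix₀(κ,j), where j is determined by π(κ)(κ,j) = (κ,i); (ii) for every π ∈ A₀, every κ ∈ Card and every limit ordinal α ≤ F_lim(κ), there exist finitely many subgroups B₀,…,B_{n−1}, each of the form Fix₀(κ′,i′) or Small₀(κ′,[0,α′)), such that π⁻¹ · Small₀(κ,[0,α)) · π ⊇ B₀ ∩ ⋯ ∩ B_{n−1}. -/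
noncomputable section

open Classical

/-- The group A₀ of ℙ₀-automorphisms: for each level κ a finite-support permutation of the
indices {i : i < F_lim(κ)}, which is the identity above some height and at all non-levels. -/
structure A0 (F : Card0 → Card0) : Type 1 where
  π : Card0 → (Ord0 ≃ Ord0)
  maps : ∀ κ i, Cardinal.aleph0 ≤ κ → (i < (FlimOf F κ).ord ↔ π κ i < (FlimOf F κ).ord)
  finsupp : ∀ κ, {i | π κ i ≠ i}.Finite
  ht : Card0
  above : ∀ κ, ht ≤ κ → π κ = Equiv.refl Ord0
  notinf : ∀ κ, ¬ Cardinal.aleph0 ≤ κ → π κ = Equiv.refl Ord0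

/-- The action of a ∈ A₀ on conditions, relabelling vertices: (a p)(π(κ)(κ,i)) = p(κ,i). -/
def A0.act {F : Card0 → Card0} (a : A0 F) (p : RawP0) : RawP0 where
  verts := {v | (v.1, (a.π v.1).symm v.2) ∈ p.verts}
  le := fun x y => p.le (x.1, (a.π x.1).symm x.2) (y.1, (a.π y.1).symm y.2)
  val := fun v => p.val (v.1, (a.π v.1).symm v.2)

/-- a ∈ A₀ is small: every index is moved only within its interval [γ, γ+ω), γ a limit
ordinal (or 0). -/
def IsSmall0 {F : Card0 → Card0} (a : A0 F) : Prop :=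
  ∀ κ i, ∃ γ : Ord0, (γ = 0 ∨ Order.IsSuccLimit γ) ∧ γ ≤ i ∧ i < γ + Ordinal.omega0 ∧
    γ ≤ a.π κ i ∧ a.π κ i < γ + Ordinal.omega0

/-- The subgroup Fix₀(κ,i) of A₀. -/
def Fix0 (F : Card0 → Card0) (κ : Card0) (i : Ord0) : Set (A0 F) :=
  {a | a.π κ i = i}

/-- The subgroup Small₀(κ,[0,α)) of A₀. -/
def Small0 (F : Card0 → Card0) (κ : Card0) (α : Ord0) : Set (A0 F) :=
  {a | ∀ i < α, ∃ γ : Ord0, (γ = 0 ∨ Order.IsSuccLimit γ) ∧ γ ≤ i ∧ i < γ + Ordinal.omega0 ∧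
        γ ≤ a.π κ i ∧ a.π κ i < γ + Ordinal.omega0}

/-- b = π⁻¹ ∘ c ∘ π, where π = a; i.e. b is the conjugate π⁻¹ c π. -/
def ConjEq {F : Card0 → Card0} (a b c : A0 F) : Prop :=
  ∀ κ, b.π κ = ((a.π κ).trans (c.π κ)).trans (a.π κ).symm

/-- Subgroups of the two basic forms Fix₀(κ,i), Small₀(λ,[0,α)). -/
def IsBasicSub0 (F : Card0 → Card0) (B : Set (A0 F)) : Prop :=
  (∃ κ i, Cardinal.aleph0 ≤ κ ∧ i < (FlimOf F κ).ord ∧ B = Fix0 F κ i) ∨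
  (∃ κ α, Cardinal.aleph0 ≤ κ ∧ Order.IsSuccLimit α ∧ α ≤ (FlimOf F κ).ord ∧ B = Small0 F κ α)

/-! The conjugate `a b a⁻¹` is computed levelwise, which gives (i) at once. For (ii), let `b`
lie in `Small₀(κ,[0,α))` and fix every index below `F_lim(κ)` that `a` moves at level `κ`
(finitely many `Fix₀` conditions). Take `i < α`. If `b` fixes `a⁻¹ i`, then `a b a⁻¹` fixes `i`.
Otherwise `a⁻¹ i` is not moved by `a`, so `a⁻¹ i = i`; then `b i ≠ i` is not fixed by `b`,
hence not moved by `a`, and `a b a⁻¹` sends `i` to `b i`, in the same `ω`-block as `i`. -/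

def SameOmegaBlock (i j : Ord0) : Prop :=
  ∃ γ : Ord0, (γ = 0 ∨ Order.IsSuccLimit γ) ∧ γ ≤ i ∧ i < γ + Ordinal.omega0 ∧
    γ ≤ j ∧ j < γ + Ordinal.omega0

theorem sameOmegaBlock_refl (i : Ord0) : SameOmegaBlock i i := by
  refine ⟨Ordinal.omega0 * (i / Ordinal.omega0), ?_, Ordinal.mul_div_le i _, ?_,
    Ordinal.mul_div_le i _, ?_⟩
  · rcases eq_or_ne (i / Ordinal.omega0) 0 with h | h
    · left; simp [h]
    · exact .inr (Ordinal.isSuccLimit_mul_left Ordinal.isSuccLimit_omega0 (pos_iff_ne_zero.2 h))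
  all_goals
    conv_lhs => rw [← Ordinal.div_add_mod i Ordinal.omega0]
    exact (add_lt_add_iff_left _).2 (Ordinal.mod_lt i Ordinal.omega0_ne_zero)

theorem mem_small0_iff {F : Card0 → Card0} {κ : Card0} {α : Ord0} {a : A0 F} :
    a ∈ Small0 F κ α ↔ ∀ i < α, SameOmegaBlock i (a.π κ i) :=
  Iff.rfl

namespace A0

variable {F : Card0 → Card0}

theorem lt_flim_iff_symm {a : A0 F} {κ : Card0} (hκ : Cardinal.aleph0 ≤ κ) (i : Ord0) :
    i < (FlimOf F κ).ord ↔ (a.π κ).symm i < (FlimOf F κ).ord := by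
  simpa using (a.maps κ ((a.π κ).symm i) hκ).symm

/-- The conjugate `a b a⁻¹`. -/
def conj (a b : A0 F) : A0 F where
  π κ := ((a.π κ).symm.trans (b.π κ)).trans (a.π κ)
  maps κ i hκ :=
    ((lt_flim_iff_symm hκ i).trans (b.maps κ _ hκ)).trans (a.maps κ _ hκ)
  finsupp κ := by
    refine ((b.finsupp κ).image (a.π κ)).subset fun i hi =>
      ⟨(a.π κ).symm i, fun h => hi ?_, by simp⟩
    simp [h]
  ht := max a.ht b.ht
  above κ h := by
    ext x
    simp [a.above κ (le_of_max_le_left h), b.above κ (le_of_max_le_right h)]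
  notinf κ h := by
    ext x
    simp [a.notinf κ h, b.notinf κ h]

theorem conj_apply (a b : A0 F) (κ : Card0) (i : Ord0) :
    (a.conj b).π κ i = a.π κ (b.π κ ((a.π κ).symm i)) :=
  rfl

theorem conjEq_conj (a b : A0 F) : ConjEq a b (a.conj b) := by
  intro κ
  ext x
  simp [conj_apply]

theorem conj_mem_fix0_iff {a b : A0 F} {κ : Card0} {i : Ord0} :
    a.conj b ∈ Fix0 F κ i ↔ b ∈ Fix0 F κ ((a.π κ).symm i) := by
  simp only [Fix0, Set.mem_ofPred_eq, conj_apply]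
  exact ((a.π κ).eq_symm_apply).symm

theorem exists_mem_fix0_conjEq_iff (a b : A0 F) (κ : Card0) (i : Ord0) :
    (∃ c ∈ Fix0 F κ i, ConjEq a b c) ↔ b ∈ Fix0 F κ ((a.π κ).symm i) := by
  refine ⟨fun ⟨c, hc, hconj⟩ => ?_, fun hb => ⟨a.conj b, conj_mem_fix0_iff.2 hb, conjEq_conj a b⟩⟩
  show b.π κ _ = _
  simp only [hconj κ, Equiv.trans_apply, Equiv.apply_symm_apply, show c.π κ i = i from hc]

theorem conj_mem_small0 {a b : A0 F} {κ : Card0} (hκ : Cardinal.aleph0 ≤ κ) {α : Ord0}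
    (hα : α ≤ (FlimOf F κ).ord) (hb : b ∈ Small0 F κ α)
    (hfix : ∀ j < (FlimOf F κ).ord, a.π κ j ≠ j → b.π κ j = j) :
    a.conj b ∈ Small0 F κ α := by
  have fixed_by_a : ∀ j < (FlimOf F κ).ord, b.π κ j ≠ j → a.π κ j = j := fun j hj =>
    not_imp_comm.1 (hfix j hj)
  rw [mem_small0_iff] at hb ⊢
  intro i hiα
  have hi : i < (FlimOf F κ).ord := hiα.trans_le hα
  by_cases hbi : b.π κ ((a.π κ).symm i) = (a.π κ).symm i
  · rw [conj_apply, hbi, Equiv.apply_symm_apply]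
    exact sameOmegaBlock_refl i
  · have hai : (a.π κ).symm i = i := by
      simpa using (fixed_by_a _ ((lt_flim_iff_symm hκ i).1 hi) hbi).symm
    rw [hai] at hbi
    have hab : a.π κ (b.π κ i) = b.π κ i :=
      fixed_by_a _ ((b.maps κ i hκ).1 hi) fun h => hbi ((b.π κ).injective h)
    rw [conj_apply, hai, hab]
    exact hb i hiα

end A0

theorem statement8_general (F : Card0 → Card0) :
    -- (i)
    (∀ a : A0 F, ∀ κ : Card0, Cardinal.aleph0 ≤ κ → ∀ i : Ord0, i < (FlimOf F κ).ord →
      ∀ b : A0 F, (∃ c ∈ Fix0 F κ i, ConjEq a b c) ↔ b ∈ Fix0 F κ ((a.π κ).symm i)) ∧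
    -- (ii)
    (∀ a : A0 F, ∀ κ : Card0, Cardinal.aleph0 ≤ κ →
      ∀ α : Ord0, Order.IsSuccLimit α → α ≤ (FlimOf F κ).ord →
      ∃ (n : ℕ) (G : Fin n → Set (A0 F)), (∀ l, IsBasicSub0 F (G l)) ∧
        ∀ b : A0 F, (∀ l, b ∈ G l) → ∃ c ∈ Small0 F κ α, ConjEq a b c) := by
  refine ⟨fun a κ _ i _ b => A0.exists_mem_fix0_conjEq_iff a b κ i, ?_⟩
  intro a κ hκ α hα hαF
  set moved : Set Ord0 := {j | j < (FlimOf F κ).ord ∧ a.π κ j ≠ j}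
  have hmoved : moved.Finite := (a.finsupp κ).subset fun j hj => hj.2
  obtain ⟨n, G, hG⟩ := ((hmoved.image (Fix0 F κ)).insert (Small0 F κ α)).fin_embedding
  have mem_range : ∀ B, B ∈ Set.range G ↔ B = Small0 F κ α ∨ ∃ j ∈ moved, Fix0 F κ j = B :=
    fun B => by rw [hG]; rfl
  refine ⟨n, G, fun l => ?_, fun b hb => ⟨a.conj b, ?_, A0.conjEq_conj a b⟩⟩
  · rcases (mem_range _).1 ⟨l, rfl⟩ with h | ⟨j, hj, h⟩
    · exact .inr ⟨κ, α, hκ, hα, hαF, h⟩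
    · exact .inl ⟨κ, j, hκ, hj.1, h.symm⟩
  · have mem_of_range : ∀ B, B ∈ Set.range G → b ∈ B := by
      rintro _ ⟨l, rfl⟩
      exact hb l
    refine A0.conj_mem_small0 hκ hαF (mem_of_range _ ((mem_range _).2 (.inl rfl))) ?_
    exact fun j hj haj => mem_of_range _ ((mem_range _).2 (.inr ⟨j, ⟨hj, haj⟩, rfl⟩))

/-- The normality property for the subgroups Fix₀(κ,i) and
Small₀(κ,[0,α)) of A₀:
(i) π⁻¹·Fix₀(κ,i)·π = Fix₀(κ,j), where j is determined by π(κ)(κ,j) = (κ,i);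
(ii) π⁻¹·Small₀(κ,[0,α))·π contains a finite intersection of basic subgroups. -/
theorem statement8 (F : Card0 → Card0)
    (hF : ∀ κ, Cardinal.aleph0 ≤ κ → Order.succ (Order.succ κ) ≤ F κ)
    (hFmono : ∀ κ lam, Cardinal.aleph0 ≤ κ → κ ≤ lam → F κ ≤ F lam) :
    -- (i)
    (∀ a : A0 F, ∀ κ : Card0, Cardinal.aleph0 ≤ κ → ∀ i : Ord0, i < (FlimOf F κ).ord →
      ∀ b : A0 F, (∃ c ∈ Fix0 F κ i, ConjEq a b c) ↔ b ∈ Fix0 F κ ((a.π κ).symm i)) ∧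
    -- (ii)
    (∀ a : A0 F, ∀ κ : Card0, Cardinal.aleph0 ≤ κ →
      ∀ α : Ord0, Order.IsSuccLimit α → α ≤ (FlimOf F κ).ord →
      ∃ (n : ℕ) (G : Fin n → Set (A0 F)), (∀ l, IsBasicSub0 F (G l)) ∧
        ∀ b : A0 F, (∀ l, b ∈ G l) → ∃ c ∈ Small0 F κ α, ConjEq a b c) :=
  statement8_general F
end
end

section
/- ≤_{T(κ⁺,β)} is a partial order on T(κ⁺,β) with the empty tree as maximal element. Moreover, for s, t ∈ T(κ⁺,β), s ≤_{T(κ⁺,β)} t holds if and only if there exists an injection ι : t → s with ι(α,z) = (α,z̄) for some z̄ ⊇ z for every vertex (α,z) of t; such an ι is then unique, satisfies z = z̄ ∩ (supp t) for every (α,z), and preserves and reflects the tree order, so that its image is a subtree of s. -/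
noncomputable section

open Classical

/-- α is a level of the trees in T(K,β): a cardinal (0 or infinite) with α ≤ K. -/
def IsLevel (K : Card0) (α : Card0) : Prop := (α = 0 ∨ Cardinal.aleph0 ≤ α) ∧ α ≤ K

/-- P is a partition of the set S. -/
def IsPartitionOf (P : Set (Set Ord0)) (S : Set Ord0) : Prop :=
  (∀ z ∈ P, z.Nonempty ∧ z ⊆ S) ∧ (∀ x ∈ S, ∃! z, z ∈ P ∧ x ∈ z)

/-- x and y lie in a common block of the partition P. -/
def sameBlock (P : Set (Set Ord0)) (x y : Ord0) : Prop := ∃ z ∈ P, x ∈ z ∧ y ∈ z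

/-- A tree below finitely many points of level K: a (finite) support of top indices
together with a partition of the support for every level. -/
structure PTree : Type 1 where
  supp : Set Ord0
  A : Card0 → Set (Set Ord0)

/-- t is a tree below its (finitely many) top-level points: a refining sequence of
partitions of the support which is the one-block partition at level 0, discrete at
level K, and eventually constant below every limit cardinal. -/
def IsPTree (K : Card0) (t : PTree) : Prop :=
  t.supp.Finite ∧
  (∀ α, IsLevel K α → IsPartitionOf (t.A α) t.supp) ∧
  (∀ α, ¬ IsLevel K α → t.A α = ∅) ∧
  (∀ x ∈ t.supp, ∀ y ∈ t.supp, sameBlock (t.A 0) x y) ∧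
  (t.A K = {z | ∃ b ∈ t.supp, z = {b}}) ∧
  (∀ α α' : Card0, IsLevel K α → IsLevel K α' → α ≤ α' →
      ∀ z' ∈ t.A α', ∃ z ∈ t.A α, z' ⊆ z) ∧
  (∀ α : Card0, IsLimitCard α → α ≤ K →
      ∃ α0 : Card0, α0 < α ∧ ∀ γ, IsLevel K γ → α0 ≤ γ → γ ≤ α → t.A γ = t.A α)

/-- The collection T(K,β) of trees below points (K,β₀),…,(K,β_{k−1}) with all β_l < β. -/
def Tset (K : Card0) (β : Ord0) : Set PTree :=
  {t | IsPTree K t ∧ ∀ b ∈ t.supp, b < β}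

/-- The partial order on T(K,β): s ≤ t iff the support grows and the level partitions
of s and t agree on the support of t. -/
def tle (K : Card0) (s t : PTree) : Prop :=
  t.supp ⊆ s.supp ∧ ∀ α, IsLevel K α → ∀ x ∈ t.supp, ∀ y ∈ t.supp,
    (sameBlock (s.A α) x y ↔ sameBlock (t.A α) x y)

/-- The empty tree; the maximal element of T(K,β). -/
def emptyPTree : PTree where
  supp := ∅
  A := fun _ => ∅

/-- The vertices of a tree t ∈ T(K,β): pairs (α, z) of a level and a block of the
level-α partition. -/
def PVert (K : Card0) (t : PTree) : Set (Card0 × Set Ord0) :=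
  {v | IsLevel K v.1 ∧ v.2 ∈ t.A v.1}

/-- The tree order on vertices: (α,z) ≤ (α′,z′) iff α ≤ α′ and z ⊇ z′. -/
def pvle (v w : Card0 × Set Ord0) : Prop := v.1 ≤ w.1 ∧ w.2 ⊆ v.2

/-- A level-preserving, block-enlarging embedding of the tree t into the tree s. -/
def GoodEmb (K : Card0) (t s : PTree) (ι : Card0 × Set Ord0 → Card0 × Set Ord0) : Prop :=
  ∀ v ∈ PVert K t, ι v ∈ PVert K s ∧ (ι v).1 = v.1 ∧ v.2 ⊆ (ι v).2

lemma part_block_unique {P : Set (Set Ord0)} {S : Set Ord0} (hP : IsPartitionOf P S)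
    {x : Ord0} (hx : x ∈ S) {z z' : Set Ord0} (hz : z ∈ P) (hz' : z' ∈ P)
    (hxz : x ∈ z) (hxz' : x ∈ z') : z = z' := by
  obtain ⟨u, _, hu⟩ := hP.2 x hx
  rw [hu z ⟨hz, hxz⟩, hu z' ⟨hz', hxz'⟩]

lemma PTree.ext' {s t : PTree} (h1 : s.supp = t.supp) (h2 : s.A = t.A) : s = t := by
  cases s; cases t; simp_all

/-- Key fact: if z is a t-block contained in an s-block z̄ at a common level, and
s ≤ t, then z = z̄ ∩ supp t. -/
lemma block_inter (K : Card0) {s t : PTree} (ht : IsPTree K t) (hs : IsPTree K s)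
    (hst : tle K s t) {α : Card0} (hα : IsLevel K α)
    {z zb : Set Ord0} (hz : z ∈ t.A α) (hzb : zb ∈ s.A α) (hsub : z ⊆ zb) :
    z = zb ∩ t.supp := by
  have hpt := ht.2.1 α hα
  have hps := hs.2.1 α hα
  have hzS : z ⊆ t.supp := (hpt.1 z hz).2
  obtain ⟨x, hx⟩ := (hpt.1 z hz).1
  apply Set.Subset.antisymm
  · intro y hy; exact ⟨hsub hy, hzS hy⟩
  · rintro y ⟨hy1, hy2⟩
    have hsb : sameBlock (s.A α) x y := ⟨zb, hzb, hsub hx, hy1⟩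
    obtain ⟨u, hu, hxu, hyu⟩ := (hst.2 α hα x (hzS hx) y hy2).1 hsb
    rwa [part_block_unique hpt (hzS hx) hz hu hx hxu]

lemma blocks_subset (K : Card0) {s t : PTree} (hs : IsPTree K s) (ht : IsPTree K t)
    (hsupp : s.supp = t.supp)
    (hsame : ∀ α, IsLevel K α → ∀ x ∈ t.supp, ∀ y ∈ t.supp,
      sameBlock (s.A α) x y ↔ sameBlock (t.A α) x y)
    {α : Card0} (hα : IsLevel K α) : s.A α ⊆ t.A α := by
  intro z hz
  have hps := hs.2.1 α hα
  have hpt := ht.2.1 α hα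
  obtain ⟨x, hx⟩ := (hps.1 z hz).1
  have hxS : x ∈ t.supp := hsupp ▸ (hps.1 z hz).2 hx
  obtain ⟨u, ⟨hu, hxu⟩, _⟩ := hpt.2 x hxS
  have hzu : z = u := by
    ext y
    constructor
    · intro hy
      have hyS : y ∈ t.supp := hsupp ▸ (hps.1 z hz).2 hy
      obtain ⟨w, hw, hxw, hyw⟩ := (hsame α hα x hxS y hyS).1 ⟨z, hz, hx, hy⟩
      rwa [part_block_unique hpt hxS hu hw hxu hxw]
    · intro hy
      have hyS : y ∈ t.supp := (hpt.1 u hu).2 hy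
      obtain ⟨w, hw, hxw, hyw⟩ := (hsame α hα x hxS y hyS).2 ⟨u, hu, hxu, hy⟩
      rwa [part_block_unique hps ((hps.1 z hz).2 hx) hz hw hx hxw]
  rw [hzu]; exact hu

lemma exists_super_block (K : Card0) {s t : PTree} (hs : IsPTree K s) (ht : IsPTree K t)
    (hst : tle K s t) {α : Card0} (hα : IsLevel K α) {z : Set Ord0} (hz : z ∈ t.A α) :
    ∃ zb ∈ s.A α, z ⊆ zb := by
  have hpt := ht.2.1 α hα
  have hps := hs.2.1 α hα
  obtain ⟨x, hx⟩ := (hpt.1 z hz).1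
  have hxT : x ∈ t.supp := (hpt.1 z hz).2 hx
  obtain ⟨zb, ⟨hzb, hxzb⟩, _⟩ := hps.2 x (hst.1 hxT)
  refine ⟨zb, hzb, fun y hy => ?_⟩
  have hyT := (hpt.1 z hz).2 hy
  obtain ⟨w, hw, hxw, hyw⟩ := (hst.2 α hα x hxT y hyT).2 ⟨z, hz, hx, hy⟩
  rwa [part_block_unique hps (hst.1 hxT) hzb hw hxzb hxw]

lemma goodEmb_inj (K : Card0) {s t : PTree} (hs : IsPTree K s) (ht : IsPTree K t)
    (hst : tle K s t) {ι : Card0 × Set Ord0 → Card0 × Set Ord0}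
    (hι : GoodEmb K t s ι) : Set.InjOn ι (PVert K t) := by
  intro v hv w hw heq
  obtain ⟨hιv, h1v, h2v⟩ := hι v hv
  obtain ⟨hιw, h1w, h2w⟩ := hι w hw
  have hv2 : v.2 = (ι v).2 ∩ t.supp :=
    block_inter K ht hs hst hv.1 hv.2 (by rw [← h1v]; exact hιv.2) h2v
  have hw2 : w.2 = (ι w).2 ∩ t.supp :=
    block_inter K ht hs hst hw.1 hw.2 (by rw [← h1w]; exact hιw.2) h2w
  exact Prod.ext_iff.mpr ⟨by rw [← h1v, heq, h1w], by rw [hv2, hw2, heq]⟩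

noncomputable def canonEmb (s : PTree) : Card0 × Set Ord0 → Card0 × Set Ord0 :=
  fun v => if h : ∃ zb ∈ s.A v.1, v.2 ⊆ zb then (v.1, h.choose) else v

lemma canonEmb_good (K : Card0) {s t : PTree} (hs : IsPTree K s) (ht : IsPTree K t)
    (hst : tle K s t) : GoodEmb K t s (canonEmb s) := by
  intro v hv
  have h : ∃ zb ∈ s.A v.1, v.2 ⊆ zb := exists_super_block K hs ht hst hv.1 hv.2
  simp only [canonEmb]
  rw [dif_pos h]
  exact ⟨⟨hv.1, h.choose_spec.1⟩, rfl, h.choose_spec.2⟩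

lemma emptyPTree_mem (K : Card0) (β : Ord0) : emptyPTree ∈ Tset K β := by
  refine ⟨⟨Set.finite_empty, ?_, ?_, ?_, ?_, ?_, ?_⟩, ?_⟩
  · intro α _
    constructor
    · intro z hz; exact absurd hz (Set.notMem_empty z)
    · intro x hx; exact absurd hx (Set.notMem_empty x)
  · intro _ _; rfl
  · intro x hx; exact absurd hx (Set.notMem_empty x)
  · ext z; simp [emptyPTree]
  · intro α α' _ _ _ z' hz'; exact absurd hz' (Set.notMem_empty z')
  · intro α hlim _
    exact ⟨0, Cardinal.aleph0_pos.trans_le hlim.1, fun _ _ _ _ => rfl⟩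
  · intro b hb; exact absurd hb (Set.notMem_empty b)

/-- ≤_{T(κ⁺,β)} is a partial order on T(κ⁺,β) with the empty tree as
maximal element; moreover s ≤ t holds iff there is an injection ι : t → s with
ι(α,z) = (α,z̄), z̄ ⊇ z, and such an ι is unique, satisfies z = z̄ ∩ supp t, and
preserves and reflects the tree order (so its image is a subtree of s). -/
theorem statement12 (κ : Card0) (hκ : IsLimitCard κ)
    (K : Card0) (hK : K = Order.succ κ)
    (Λ : Card0) (β : Ord0) (hβ : β ≤ Λ.ord) :
    -- partial order with maximal element
    ((∀ t ∈ Tset K β, tle K t t) ∧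
     (∀ s t u, s ∈ Tset K β → t ∈ Tset K β → u ∈ Tset K β →
        tle K s t → tle K t u → tle K s u) ∧
     (∀ s t, s ∈ Tset K β → t ∈ Tset K β → tle K s t → tle K t s → s = t) ∧
     (emptyPTree ∈ Tset K β ∧ ∀ t ∈ Tset K β, tle K t emptyPTree)) ∧
    -- characterization via embeddings
    (∀ s ∈ Tset K β, ∀ t ∈ Tset K β,
      (tle K s t ↔ ∃ ι, GoodEmb K t s ι ∧ Set.InjOn ι (PVert K t)) ∧
      (tle K s t →
        (∀ ι₁ ι₂, GoodEmb K t s ι₁ → GoodEmb K t s ι₂ → Set.EqOn ι₁ ι₂ (PVert K t)) ∧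
        (∀ ι, GoodEmb K t s ι →
          Set.InjOn ι (PVert K t) ∧
          (∀ v ∈ PVert K t, v.2 = (ι v).2 ∩ t.supp) ∧
          (∀ v ∈ PVert K t, ∀ w ∈ PVert K t, (pvle v w ↔ pvle (ι v) (ι w)))))) := by
  have hKinf : Cardinal.aleph0 ≤ K := hK ▸ le_trans hκ.1 (Order.le_succ κ)
  have hKlev : IsLevel K K := ⟨Or.inr hKinf, le_refl K⟩
  constructor
  · refine ⟨?_, ?_, ?_, ?_, ?_⟩
    · exact fun t _ => ⟨subset_rfl, fun α hα x hx y hy => Iff.rfl⟩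
    · rintro s t u _ _ _ ⟨hst1, hst2⟩ ⟨htu1, htu2⟩
      refine ⟨htu1.trans hst1, fun α hα x hx y hy => ?_⟩
      rw [hst2 α hα x (htu1 hx) y (htu1 hy), htu2 α hα x hx y hy]
    · rintro s t hsT htT hst hts
      have hsupp : s.supp = t.supp := Set.Subset.antisymm hts.1 hst.1
      refine PTree.ext' hsupp (funext fun α => ?_)
      by_cases hα : IsLevel K α
      · exact Set.Subset.antisymm
          (blocks_subset K hsT.1 htT.1 hsupp hst.2 hα)
          (blocks_subset K htT.1 hsT.1 hsupp.symm hts.2 hα)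
      · rw [hsT.1.2.2.1 α hα, htT.1.2.2.1 α hα]
    · exact emptyPTree_mem K β
    · exact fun t _ => ⟨Set.empty_subset _,
        fun α _ x hx => absurd hx (Set.notMem_empty x)⟩
  · rintro s hsT t htT
    have hs : IsPTree K s := hsT.1
    have ht : IsPTree K t := htT.1
    constructor
    · constructor
      · intro hst
        exact ⟨canonEmb s, canonEmb_good K hs ht hst,
          goodEmb_inj K hs ht hst (canonEmb_good K hs ht hst)⟩
      · rintro ⟨ι, hι, hinj⟩
        have hsupp : t.supp ⊆ s.supp := by
          intro b hb
          have hbK : ({b} : Set Ord0) ∈ t.A K := by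
            rw [ht.2.2.2.2.1]; exact ⟨b, hb, rfl⟩
          have hv : ((K, ({b} : Set Ord0)) : Card0 × Set Ord0) ∈ PVert K t := ⟨hKlev, hbK⟩
          obtain ⟨hιv, h1, h2⟩ := hι _ hv
          have hmem : (ι (K, ({b} : Set Ord0))).2 ∈ s.A K := by
            have := hιv.2; rwa [h1] at this
          rw [hs.2.2.2.2.1] at hmem
          obtain ⟨c, hc, hceq⟩ := hmem
          have hbm : b ∈ (ι (K, ({b} : Set Ord0))).2 := h2 rfl
          rw [hceq] at hbm
          rw [show b = c from hbm]; exact hc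
        refine ⟨hsupp, fun α hα x hx y hy => ?_⟩
        have hpt := ht.2.1 α hα
        constructor
        · rintro ⟨u, hu, hxu, hyu⟩
          obtain ⟨zx, ⟨hzx, hxzx⟩, _⟩ := hpt.2 x hx
          obtain ⟨zy, ⟨hzy, hyzy⟩, _⟩ := hpt.2 y hy
          have hvx : ((α, zx) : Card0 × Set Ord0) ∈ PVert K t := ⟨hα, hzx⟩
          have hvy : ((α, zy) : Card0 × Set Ord0) ∈ PVert K t := ⟨hα, hzy⟩
          obtain ⟨hιx, h1x, h2x⟩ := hι _ hvx
          obtain ⟨hιy, h1y, h2y⟩ := hι _ hvy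
          have hmx : (ι (α, zx)).2 ∈ s.A α := by have := hιx.2; rwa [h1x] at this
          have hmy : (ι (α, zy)).2 ∈ s.A α := by have := hιy.2; rwa [h1y] at this
          have hps := hs.2.1 α hα
          have e1 : (ι (α, zx)).2 = u :=
            part_block_unique hps (hsupp hx) hmx hu (h2x hxzx) hxu
          have e2 : (ι (α, zy)).2 = u :=
            part_block_unique hps (hsupp hy) hmy hu (h2y hyzy) hyu
          have : ι (α, zx) = ι (α, zy) :=
            Prod.ext_iff.mpr ⟨by rw [h1x, h1y], by rw [e1, e2]⟩
          have := hinj hvx hvy this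
          have hxy : y ∈ zx := by
            rw [show zx = zy from congrArg Prod.snd this]; exact hyzy
          exact ⟨zx, hzx, hxzx, hxy⟩
        · rintro ⟨z, hz, hxz, hyz⟩
          obtain ⟨hιv, h1, h2⟩ := hι (α, z) ⟨hα, hz⟩
          have hm : (ι (α, z)).2 ∈ s.A α := by have := hιv.2; rwa [h1] at this
          exact ⟨(ι (α, z)).2, hm, h2 hxz, h2 hyz⟩
    · intro hst
      constructor
      · intro ι₁ ι₂ h1 h2 v hv
        obtain ⟨hι1, e1, s1⟩ := h1 v hv
        obtain ⟨hι2, e2, s2⟩ := h2 v hv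
        have hpt := ht.2.1 v.1 hv.1
        obtain ⟨x, hx⟩ := (hpt.1 v.2 hv.2).1
        have hxS : x ∈ s.supp := hst.1 ((hpt.1 v.2 hv.2).2 hx)
        have hm1 : (ι₁ v).2 ∈ s.A v.1 := by have := hι1.2; rwa [e1] at this
        have hm2 : (ι₂ v).2 ∈ s.A v.1 := by have := hι2.2; rwa [e2] at this
        exact Prod.ext_iff.mpr ⟨by rw [e1, e2],
          part_block_unique (hs.2.1 v.1 hv.1) hxS hm1 hm2 (s1 hx) (s2 hx)⟩
      · intro ι hι
        have hblock : ∀ v ∈ PVert K t, v.2 = (ι v).2 ∩ t.supp := by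
          intro v hv
          obtain ⟨hιv, h1, h2⟩ := hι v hv
          exact block_inter K ht hs hst hv.1 hv.2 (by rw [← h1]; exact hιv.2) h2
        refine ⟨goodEmb_inj K hs ht hst hι, hblock, ?_⟩
        intro v hv w hw
        obtain ⟨hιv, h1v, h2v⟩ := hι v hv
        obtain ⟨hιw, h1w, h2w⟩ := hι w hw
        have hmv : (ι v).2 ∈ s.A v.1 := by have := hιv.2; rwa [h1v] at this
        have hmw : (ι w).2 ∈ s.A w.1 := by have := hιw.2; rwa [h1w] at this
        constructor
        · rintro ⟨hle, hsub⟩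
          refine ⟨by rw [h1v, h1w]; exact hle, ?_⟩
          obtain ⟨u, hu, hsu⟩ :=
            hs.2.2.2.2.2.1 v.1 w.1 hv.1 hw.1 hle (ι w).2 hmw
          have hpt := ht.2.1 w.1 hw.1
          obtain ⟨x, hx⟩ := (hpt.1 w.2 hw.2).1
          have hxS : x ∈ s.supp := hst.1 ((hpt.1 w.2 hw.2).2 hx)
          have hxu : x ∈ u := hsu (h2w hx)
          have hxv : x ∈ (ι v).2 := h2v (hsub hx)
          have : u = (ι v).2 :=
            part_block_unique (hs.2.1 v.1 hv.1) hxS hu hmv hxu hxv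
          rw [← this]; exact hsu
        · rintro ⟨hle, hsub⟩
          refine ⟨by rw [← h1v, ← h1w]; exact hle, ?_⟩
          rw [hblock v hv, hblock w hw]
          exact Set.inter_subset_inter_left _ hsub
end
end
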